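/- Let Δ be an additive subgroup of ℂ and φ: Δ → ℂ × ℂ → ℂ a skew-symmetric ℤ-bilinear form (φ(α,β) = −φ(β,α), additive in each argument). On the space A with basis {x_α : α ∈ Δ}, the bracket [x_α, x_β] = φ(α,β) x_{α+β} defines a Lie algebra, and together with the Novikov product x_α∘x_β = β x_{α+β} it satisfies the compatibility [x_γ∘x_α, x_β] − [x_γ∘x_β, x_α] + [x_γ,x_α]∘x_β − [x_γ,x_β]∘x_α − x_γ∘[x_α,x_β] = 0. -/

import Mathlib

/-!
Both products are twisted group-algebra products `x_α x_β = c(α,β) x_{α+β}` on the free module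
over `Δ`, so each required identity is multilinear and need only be checked on basis vectors,
where it becomes an identity between structure constants. For the Jacobi identity this is the
cyclic identity `∑ φ(α,β) φ(α+β,γ) = 0`, which follows from additivity of `φ` in its first argument
and skew-symmetry; the Gelfand–Dorfman compatibility reduces, by the same two facts, to
`α φ(α,β) + β φ(α,β) = (α + β) φ(α,β)`.
-/

namespace Finsupp

variable {ι R N : Type*}

section Additive

variable [AddZeroClass R] [AddGroup N]

theorem eq_zero_of_forall_single_eq_zero (f : (ι →₀ R) → N) (hf : ∀ x y, f (x + y) = f x + f y)
    (h : ∀ i a, f (single i a) = 0) (u : ι →₀ R) : f u = 0 :=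
  DFunLike.congr_fun (addHom_ext (f := AddMonoidHom.mk' f hf) (g := 0) h) u

theorem eq_zero_of_forall_single_eq_zero₃ (E : (ι →₀ R) → (ι →₀ R) → (ι →₀ R) → N)
    (h₁ : ∀ x y v w, E (x + y) v w = E x v w + E y v w)
    (h₂ : ∀ u x y w, E u (x + y) w = E u x w + E u y w)
    (h₃ : ∀ u v x y, E u v (x + y) = E u v x + E u v y)
    (h : ∀ i a j b k c, E (single i a) (single j b) (single k c) = 0) (u v w : ι →₀ R) :
    E u v w = 0 :=
  eq_zero_of_forall_single_eq_zero (E · v w) (h₁ · · v w) (fun i a =>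
    eq_zero_of_forall_single_eq_zero (E (single i a) · w) (h₂ _ · · w) (fun j b =>
      eq_zero_of_forall_single_eq_zero (E (single i a) (single j b)) (h₃ _ _)
        (h i a j b) w) v) u

end Additive

section Ring

variable [AddCommMonoid ι] [CommRing R]

noncomputable def twistedMul (c : ι → ι → R) : (ι →₀ R) →ₗ[R] (ι →₀ R) →ₗ[R] (ι →₀ R) :=
  lsum R fun α => LinearMap.toSpanSingleton R _ <|
    lsum R fun β => LinearMap.toSpanSingleton R _ (single (α + β) (c α β))

theorem twistedMul_single_single (c : ι → ι → R) (α β : ι) (a b : R) :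
    twistedMul c (single α a) (single β b) = single (α + β) (a * b * c α β) := by
  simp only [twistedMul, lsum_single, LinearMap.toSpanSingleton_apply, LinearMap.smul_apply,
    smul_single, smul_eq_mul, mul_assoc]

theorem twistedMul_swap {c : ι → ι → R} (hc : ∀ α β, c α β = -c β α) (u v : ι →₀ R) :
    twistedMul c v u = -twistedMul c u v := by
  suffices (twistedMul c).flip = (twistedMul c).compr₂ (-LinearMap.id) from
    LinearMap.congr_fun₂ this u v
  ext α β
  simp [twistedMul_single_single, hc β α, add_comm α β]

theorem twistedMul_self [IsAddTorsionFree R] {c : ι → ι → R} (hc : ∀ α β, c α β = -c β α)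
    (u : ι →₀ R) : twistedMul c u u = 0 :=
  self_eq_neg.mp (twistedMul_swap hc u u)

theorem twistedMul_jacobi {c : ι → ι → R}
    (hc : ∀ α β γ, c α β * c (α + β) γ + c β γ * c (β + γ) α + c γ α * c (γ + α) β = 0)
    (u v w : ι →₀ R) :
    twistedMul c (twistedMul c u v) w + twistedMul c (twistedMul c v w) u +
      twistedMul c (twistedMul c w u) v = 0 := by
  refine eq_zero_of_forall_single_eq_zero₃ (fun u v w => twistedMul c (twistedMul c u v) w +
    twistedMul c (twistedMul c v w) u + twistedMul c (twistedMul c w u) v) ?_ ?_ ?_ ?_ u v w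
  iterate 3 (intros; simp only [map_add, LinearMap.add_apply]; abel)
  intro α r β s γ t
  simp only [twistedMul_single_single]
  rw [show β + γ + α = α + β + γ by abel, show γ + α + β = α + β + γ by abel, ← single_add,
    ← single_add, single_eq_zero]
  linear_combination r * s * t * hc α β γ

theorem twistedMul_gelfandDorfman {c d : ι → ι → R}
    (hcd : ∀ α β γ, d γ α * c (γ + α) β - d γ β * c (γ + β) α + c γ α * d (γ + α) β -
      c γ β * d (γ + β) α - c α β * d γ (α + β) = 0)
    (u v w : ι →₀ R) :
    twistedMul c (twistedMul d w u) v - twistedMul c (twistedMul d w v) u +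
      twistedMul d (twistedMul c w u) v - twistedMul d (twistedMul c w v) u -
      twistedMul d w (twistedMul c u v) = 0 := by
  refine eq_zero_of_forall_single_eq_zero₃ (fun u v w =>
    twistedMul c (twistedMul d w u) v - twistedMul c (twistedMul d w v) u +
      twistedMul d (twistedMul c w u) v - twistedMul d (twistedMul c w v) u -
      twistedMul d w (twistedMul c u v)) ?_ ?_ ?_ ?_ u v w
  iterate 3 (intros; simp only [map_add, LinearMap.add_apply]; abel)
  intro α r β s γ t
  simp only [twistedMul_single_single]
  rw [show γ + β + α = γ + α + β by abel, show γ + (α + β) = γ + α + β by abel, ← single_sub,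
    ← single_add, ← single_sub, ← single_sub, single_eq_zero]
  linear_combination r * s * t * hcd α β γ

end Ring

end Finsupp

open Finsupp

theorem stmt_12_general (Δ : AddSubgroup ℂ) (φ : Δ → Δ → ℂ)
    (hadd₁ : ∀ α α' β : Δ, φ (α + α') β = φ α β + φ α' β)
    (hskew : ∀ α β : Δ, φ α β = -φ β α) :
    ∃ br circ : (Δ →₀ ℂ) →ₗ[ℂ] (Δ →₀ ℂ) →ₗ[ℂ] (Δ →₀ ℂ),
      (∀ α β : Δ, br (single α 1) (single β 1) = φ α β • single (α + β) 1) ∧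
      (∀ α β : Δ, circ (single α 1) (single β 1) = (β : ℂ) • single (α + β) 1) ∧
      (∀ u, br u u = 0) ∧
      (∀ u v w, br (br u v) w + br (br v w) u + br (br w u) v = 0) ∧
      (∀ u v w,
        br (circ w u) v - br (circ w v) u + circ (br w u) v - circ (br w v) u -
          circ w (br u v) = 0) := by
  have jacobi (α β γ : Δ) :
      φ α β * φ (α + β) γ + φ β γ * φ (β + γ) α + φ γ α * φ (γ + α) β = 0 := by
    rw [hadd₁, hadd₁, hadd₁, hskew β α, hskew γ α, hskew γ β]
    ring
  have compat (α β γ : Δ) :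
      (α : ℂ) * φ (γ + α) β - β * φ (γ + β) α + φ γ α * β - φ γ β * α - φ α β * ↑(α + β) = 0 := by
    rw [hadd₁, hadd₁, hskew β α]
    push_cast
    ring
  refine ⟨twistedMul φ, twistedMul fun _ β => (β : ℂ), fun α β => ?_, fun α β => ?_,
    twistedMul_self hskew, twistedMul_jacobi jacobi, twistedMul_gelfandDorfman compat⟩ <;>
  simp [twistedMul_single_single]

/-- For a skew-symmetric ℤ-bilinear form φ on Δ, the bracket
[x_α,x_β] = φ(α,β)x_{α+β} is a Lie bracket on the free space on Δ, compatible
with the Novikov product x_α∘x_β = β x_{α+β}. -/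
theorem stmt_12 (Δ : AddSubgroup ℂ) (φ : Δ → Δ → ℂ)
    (hadd₁ : ∀ α α' β : Δ, φ (α + α') β = φ α β + φ α' β)
    (hadd₂ : ∀ α β β' : Δ, φ α (β + β') = φ α β + φ α β')
    (hskew : ∀ α β : Δ, φ α β = -φ β α) :
    ∃ br circ : (Δ →₀ ℂ) →ₗ[ℂ] (Δ →₀ ℂ) →ₗ[ℂ] (Δ →₀ ℂ),
      (∀ α β : Δ, br (single α 1) (single β 1) = φ α β • single (α + β) 1) ∧
      (∀ α β : Δ, circ (single α 1) (single β 1) = (β : ℂ) • single (α + β) 1) ∧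
      (∀ u, br u u = 0) ∧
      (∀ u v w, br (br u v) w + br (br v w) u + br (br w u) v = 0) ∧
      (∀ u v w,
        br (circ w u) v - br (circ w v) u + circ (br w u) v - circ (br w v) u -
          circ w (br u v) = 0) :=
  stmt_12_general Δ φ hadd₁ hskew
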